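/- Let m, n be non-negative integers, let μ be an (n|m)-hook partition (μ_{n+1} ≤ m), set ν := μ' and τ_j := ν_{m+j} for j ≥ 1. Then Σ_{i=1}^{m} ν_i(ν_i − 2(i−1)) − Σ_{j=1}^{n} τ'_j(τ'_j + 2(m−j)) = − Σ_{i≥1} μ_i(μ_i − 2i). -/

import Mathlib

/-!
Weight the cell `(k, i)` (row `k`, column `i`, from `0`) of the Young diagram of `μ` by
`2k + 1 - 2i`. Summing down column `i`, of length `c = ν_{i+1}`, gives `c (c - 2i)`, so the
`ν`-sum is the total weight of the first `m` columns; summed along rows instead, row `k`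
contributes `a (2k + 2 - a)` with `a = min(m, μ_{k+1})`. The cells in columns `≥ m` form `τ`, and
`τ'` consists of the rows `μ_{k+1} - m`, which vanish for `k ≥ n` by the hook condition. Both
sides are now sums over rows, and they agree row by row.
-/

/-- A partition: a weakly decreasing, eventually zero sequence of
non-negative integers. Here `l i` denotes the part `λ_{i+1}` (0-indexed). -/
def IsPartition (l : ℕ → ℕ) : Prop :=
  Antitone l ∧ ∃ N, ∀ i, N ≤ i → l i = 0

/-- The conjugate partition: `conj l j` is `λ'_{j+1} = #{ i ≥ 1 : λ_i ≥ j+1 }`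
(0-indexed). -/
noncomputable def conj (l : ℕ → ℕ) (j : ℕ) : ℕ :=
  Set.ncard {i : ℕ | j + 1 ≤ l i}

open Finset

namespace IsPartition

variable {l : ℕ → ℕ}

theorem _root_.Antitone.conj_eq_find (hl : Antitone l) (j : ℕ) (hex : ∃ c, l c ≤ j) :
    conj l j = Nat.find hex := by
  classical
  have hS : {i | j + 1 ≤ l i} = Set.Iio (Nat.find hex) := by
    ext i
    simp only [Set.mem_ofPred_eq, Set.mem_Iio, Nat.lt_find_iff, not_le]
    exact ⟨fun hi k hk => lt_of_lt_of_le hi (hl hk), fun h => h i le_rfl⟩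
  rw [conj, hS, Set.ncard_Iio_nat]

theorem lt_conj_iff (hl : IsPartition l) {i j : ℕ} : i < conj l j ↔ j < l i := by
  obtain ⟨N, hN⟩ := hl.2
  have hex : ∃ c, l c ≤ j := ⟨N, by simp [hN N le_rfl]⟩
  rw [hl.1.conj_eq_find j hex, Nat.lt_find_iff]
  exact ⟨fun h => not_le.1 (h i le_rfl), fun hi k hk => not_le.2 (lt_of_lt_of_le hi (hl.1 hk))⟩

theorem conj_isPartition (hl : IsPartition l) : IsPartition (conj l) := by
  refine ⟨fun j j' hjj' => ?_, l 0, fun j hj => ?_⟩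
  · by_contra! h
    have := hl.lt_conj_iff.1 h
    exact lt_irrefl _ (hl.lt_conj_iff.2 (lt_of_le_of_lt hjj' this))
  · by_contra h
    have := hl.lt_conj_iff.1 (Nat.pos_of_ne_zero h)
    omega

theorem shift (hl : IsPartition l) (m : ℕ) : IsPartition (fun k => l (m + k)) := by
  obtain ⟨N, hN⟩ := hl.2
  exact ⟨fun k k' h => hl.1 (by omega), N, fun k hk => hN _ (by omega)⟩

theorem conj_conj_shift (hl : IsPartition l) (m j : ℕ) :
    conj (fun k => conj l (m + k)) j = l j - m := by
  refine eq_of_forall_lt_iff fun k => ?_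
  rw [(hl.conj_isPartition.shift m).lt_conj_iff, hl.lt_conj_iff]
  omega

theorem sum_range_sum_range_conj (hl : IsPartition l) {N : ℕ} (hN : ∀ k, N ≤ k → l k = 0)
    {M : Type*} [AddCommMonoid M] (m : ℕ) (f : ℕ → ℕ → M) :
    ∑ i ∈ range m, ∑ k ∈ range (conj l i), f i k =
      ∑ k ∈ range N, ∑ i ∈ range (min m (l k)), f i k := by
  refine sum_comm' fun i k => ?_
  simp only [mem_range, hl.lt_conj_iff, lt_min_iff]
  have hkN : i < l k → k < N := fun h => by
    by_contra! hk
    simp [hN k hk] at h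
  tauto

end IsPartition

theorem sum_range_two_mul_add (C : ℤ) (c : ℕ) :
    ∑ k ∈ range c, (2 * (k : ℤ) + C) = c * (c - 1 + C) := by
  induction c with
  | zero => simp
  | succ c ih => rw [sum_range_succ, ih]; push_cast; ring

theorem sum_range_sub_two_mul (C : ℤ) (a : ℕ) :
    ∑ i ∈ range a, (C - 2 * (i : ℤ)) = a * (C - a + 1) := by
  induction a with
  | zero => simp
  | succ a ih => rw [sum_range_succ, ih]; push_cast; ring

theorem IsPartition.sum_range_conj_mul_sub {l : ℕ → ℕ} (hl : IsPartition l) {N : ℕ}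
    (hN : ∀ k, N ≤ k → l k = 0) (m : ℕ) :
    ∑ i ∈ range m, (conj l i : ℤ) * (conj l i - 2 * i) =
      ∑ k ∈ range N, ((min m (l k) : ℕ) : ℤ) * (2 * k + 2 - (min m (l k) : ℕ)) := by
  calc ∑ i ∈ range m, (conj l i : ℤ) * (conj l i - 2 * i)
      = ∑ i ∈ range m, ∑ k ∈ range (conj l i), (2 * (k : ℤ) + 1 - 2 * i) := by
        refine sum_congr rfl fun i _ => ?_
        simp_rw [add_sub_assoc, sum_range_two_mul_add]
        ring
    _ = ∑ k ∈ range N, ∑ i ∈ range (min m (l k)), (2 * (k : ℤ) + 1 - 2 * i) :=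
        hl.sum_range_sum_range_conj hN m _
    _ = ∑ k ∈ range N, ((min m (l k) : ℕ) : ℤ) * (2 * k + 2 - (min m (l k) : ℕ)) := by
        refine sum_congr rfl fun k _ => ?_
        rw [sum_range_sub_two_mul]
        ring

theorem casimir_row_identity (m k a : ℕ) :
    ((min m a : ℕ) : ℤ) * (2 * k + 2 - (min m a : ℕ)) -
        ((a - m : ℕ) : ℤ) * (((a - m : ℕ) : ℤ) + 2 * ((m : ℤ) - ((k : ℤ) + 1))) =
      -((a : ℤ) * ((a : ℤ) - 2 * ((k : ℤ) + 1))) := by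
  rcases le_total a m with h | h
  · rw [min_eq_right h, Nat.sub_eq_zero_of_le h]
    push_cast
    ring
  · rw [min_eq_left h, Nat.cast_sub h]
    ring

/-- Case 2 (osp(2m|2n) versus c_∞) of Lemma 4.2.
Let μ be an (n|m)-hook partition, ν := μ', τ_j := ν_{m+j}. Then
Σ_{i=1}^{m} ν_i(ν_i − 2(i−1)) − Σ_{j=1}^{n} τ'_j(τ'_j + 2(m−j))
  = − Σ_{i≥1} μ_i(μ_i − 2i). -/
theorem casimir_comparison_osp (m n : ℕ) (mu : ℕ → ℕ)
    (hmu : IsPartition mu) (hhook : mu n ≤ m) :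
    ∑ i ∈ Finset.range m,
        (conj mu i : ℤ) * ((conj mu i : ℤ) - 2 * (i : ℤ)) -
      ∑ j ∈ Finset.range n,
        (conj (fun k => conj mu (m + k)) j : ℤ) *
          ((conj (fun k => conj mu (m + k)) j : ℤ) + 2 * ((m : ℤ) - ((j : ℤ) + 1))) =
      - ∑ᶠ i : ℕ, (mu i : ℤ) * ((mu i : ℤ) - 2 * ((i : ℤ) + 1)) := by
  obtain ⟨N₀, hN₀⟩ := hmu.2
  have hN : ∀ k, n + N₀ ≤ k → mu k = 0 := fun k hk => hN₀ k (by omega)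
  have hτ : ∑ j ∈ range n, (conj (fun k => conj mu (m + k)) j : ℤ) *
        ((conj (fun k => conj mu (m + k)) j : ℤ) + 2 * ((m : ℤ) - ((j : ℤ) + 1))) =
      ∑ j ∈ range (n + N₀), ((mu j - m : ℕ) : ℤ) *
        (((mu j - m : ℕ) : ℤ) + 2 * ((m : ℤ) - ((j : ℤ) + 1))) := by
    simp_rw [hmu.conj_conj_shift]
    refine sum_subset (range_subset_range.2 (by omega)) fun j _ hj => ?_
    rw [Nat.sub_eq_zero_of_le ((hmu.1 (not_lt.1 (mem_range.not.1 hj))).trans hhook)]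
    simp
  have hfin : ∑ᶠ i : ℕ, (mu i : ℤ) * ((mu i : ℤ) - 2 * ((i : ℤ) + 1)) =
      ∑ i ∈ range (n + N₀), (mu i : ℤ) * ((mu i : ℤ) - 2 * ((i : ℤ) + 1)) :=
    finsum_eq_sum_of_support_subset _ fun i hi => by
      by_contra h
      exact hi (by simp [hN i (by simpa using h)])
  rw [hmu.sum_range_conj_mul_sub hN, hτ, hfin, ← sum_neg_distrib, ← sum_sub_distrib]
  exact sum_congr rfl fun k _ => casimir_row_identity m k (mu k)
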